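/- The stabilizer in SO(3) of the polynomial x³ − 3xy² is a group of order 6, generated by the rotation by angle π about the x-axis and the rotation by angle 2π/3 about the z-axis. -/

import Mathlib

/-
`x³ - 3xy² = Re (x + iy)³` does not involve `z`. If `A` fixes it, then, since
`A⁻¹ (v + A e_z) = A⁻¹ v + e_z`, the polynomial is invariant under translation by `A e_z`; it has
no translation symmetry in the `xy`-plane, so `A e_z = ±e_z`. Hence `A` is a rotation by some
`θ` about the z-axis, possibly composed with `rotX`, and such an `A` fixes `Re (x + iy)³` exactly
when `e^{3iθ} = 1`. This leaves six elements.
-/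

open Matrix Real

/-- Rotation by π about the x-axis. -/
def rotX : Matrix (Fin 3) (Fin 3) ℝ := !![(1:ℝ),0,0; 0,-1,0; 0,0,-1]

/-- Rotation by 2π/3 about the z-axis. -/
noncomputable def rotZ : Matrix (Fin 3) (Fin 3) ℝ :=
  !![Real.cos (2 * π / 3), -Real.sin (2 * π / 3), 0;
     Real.sin (2 * π / 3),  Real.cos (2 * π / 3), 0;
     0, 0, 1]

def cubicForm (v : Fin 3 → ℝ) : ℝ := v 0 ^ 3 - 3 * v 0 * v 1 ^ 2

def cubicStabilizer : Set (Matrix (Fin 3) (Fin 3) ℝ) :=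
  {A | A * Aᵀ = 1 ∧ A.det = 1 ∧ ∀ v, cubicForm (A⁻¹ *ᵥ v) = cubicForm v}

-- For `a = cos θ`, `b = sin θ` and `w = ±1` this is the rotation by `θ` about the z-axis times
-- `diag 1 w w`; these are the elements of SO(3) that map the z-axis to itself.
def blockRot (a b w : ℝ) : Matrix (Fin 3) (Fin 3) ℝ := !![a, -(w * b), 0; b, w * a, 0; 0, 0, w]

theorem cubicForm_add_single_two (u : Fin 3 → ℝ) (t : ℝ) :
    cubicForm (u + Pi.single 2 t) = cubicForm u := by
  simp [cubicForm]

theorem eq_zero_of_cubicForm_add_eq {c : Fin 3 → ℝ} (h : ∀ v, cubicForm (v + c) = cubicForm v) :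
    c 0 = 0 ∧ c 1 = 0 := by
  -- `cubicForm (v + c) - cubicForm v` has `x²`-coefficient `3 c₀` and `xy`-coefficient `-6 c₁`,
  -- which second differences read off.
  have e (x y : ℝ) := h ![x, y, 0]
  simp only [cubicForm, Pi.add_apply, Matrix.cons_val_zero, Matrix.cons_val_one] at e
  constructor
  · linear_combination (e 1 0 + e (-1) 0 - 2 * e 0 0) / 6
  · linear_combination -(e 1 1 - e 1 0 - e 0 1 + e 0 0) / 6

theorem cubicForm_add_col_two {A : Matrix (Fin 3) (Fin 3) ℝ} (hA : IsUnit A.det)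
    (h : ∀ v, cubicForm (A⁻¹ *ᵥ v) = cubicForm v) (v : Fin 3 → ℝ) :
    cubicForm (v + A.col 2) = cubicForm v :=
  calc cubicForm (v + A.col 2) = cubicForm (A⁻¹ *ᵥ (v + A *ᵥ Pi.single 2 1)) := by
        rw [h, mulVec_single_one]
    _ = cubicForm (A⁻¹ *ᵥ v + Pi.single 2 1) := by
        rw [mulVec_add, mulVec_mulVec, nonsing_inv_mul _ hA, one_mulVec]
    _ = cubicForm v := by rw [cubicForm_add_single_two, h]

theorem col_two_eq_zero_of_mem_cubicStabilizer {A : Matrix (Fin 3) (Fin 3) ℝ}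
    (hA : A ∈ cubicStabilizer) : A 0 2 = 0 ∧ A 1 2 = 0 :=
  eq_zero_of_cubicForm_add_eq (cubicForm_add_col_two (by simp [hA.2.1]) hA.2.2)

theorem eq_blockRot_of_orthogonal {A : Matrix (Fin 3) (Fin 3) ℝ} (hA : A * Aᵀ = 1)
    (hdet : A.det = 1) (h02 : A 0 2 = 0) (h12 : A 1 2 = 0) :
    A = blockRot (A 0 0) (A 1 0) (A 2 2) ∧ A 0 0 ^ 2 + A 1 0 ^ 2 = 1 ∧ A 2 2 ^ 2 = 1 := by
  have hA' : Aᵀ * A = 1 := mul_eq_one_comm.mp hA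
  have r22 := congrFun₂ hA 2 2
  have c00 := congrFun₂ hA' 0 0
  have c01 := congrFun₂ hA' 0 1
  have c22 := congrFun₂ hA' 2 2
  simp only [mul_apply, transpose_apply, Fin.sum_univ_three, one_apply] at r22 c00 c01 c22
  norm_num at r22 c00 c01 c22
  have hw : A 2 2 ^ 2 = 1 := by rw [h02, h12] at c22; linarith
  have h20 : A 2 0 = 0 := by nlinarith
  have h21 : A 2 1 = 0 := by nlinarith
  have hab : A 0 0 ^ 2 + A 1 0 ^ 2 = 1 := by rw [h20] at c00; linarith
  have hminor : A 0 0 * A 1 1 - A 0 1 * A 1 0 = A 2 2 := by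
    rw [det_fin_three, h02, h12, h20, h21] at hdet
    linear_combination A 2 2 * hdet - (A 0 0 * A 1 1 - A 0 1 * A 1 0) * hw
  have h01 : A 0 1 = -(A 2 2 * A 1 0) := by
    rw [h20] at c01
    linear_combination (-(A 0 1)) * hab + A 0 0 * c01 - A 1 0 * hminor
  have h11 : A 1 1 = A 2 2 * A 0 0 := by
    rw [h20] at c01
    linear_combination (-(A 1 1)) * hab + A 1 0 * c01 + A 0 0 * hminor
  refine ⟨?_, hab, hw⟩
  rw [eta_fin_three A, blockRot, h01, h11, h02, h12, h20, h21]
  simp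

section blockRot

variable {a b w : ℝ}

theorem blockRot_mul_transpose (hab : a ^ 2 + b ^ 2 = 1) (hw : w ^ 2 = 1) :
    blockRot a b w * (blockRot a b w)ᵀ = 1 := by
  obtain rfl | rfl := sq_eq_one_iff.mp hw <;> ext i j <;> fin_cases i <;> fin_cases j <;>
    simp [blockRot, mul_apply, Fin.sum_univ_three, one_apply] <;>
    first | ring1 | linear_combination hab

theorem det_blockRot : (blockRot a b w).det = w ^ 2 * (a ^ 2 + b ^ 2) := by
  simp [blockRot, det_fin_three]; ring

-- With `ζ = a + i b`, the transpose acts on `z = x + i y` as `z ↦ conj ζ * z` up to the sign `w`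
-- of the imaginary part, which `Re z³` does not see; so `Re z³` goes to
-- `Re (conj ζ)³ Re z³ - Im (conj ζ)³ Im z³`.
theorem cubicForm_transpose_blockRot_mulVec (hw : w ^ 2 = 1) (v : Fin 3 → ℝ) :
    cubicForm ((blockRot a b w)ᵀ *ᵥ v) =
      (a ^ 3 - 3 * a * b ^ 2) * cubicForm v +
        (3 * a ^ 2 * b - b ^ 3) * (3 * v 0 ^ 2 * v 1 - v 1 ^ 3) := by
  simp [cubicForm, blockRot, mulVec, dotProduct, Fin.sum_univ_three]
  linear_combination (-3 * (a * v 0 + b * v 1) * (a * v 1 - b * v 0) ^ 2) * hw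

theorem blockRot_mem_cubicStabilizer_iff (hab : a ^ 2 + b ^ 2 = 1) (hw : w ^ 2 = 1) :
    blockRot a b w ∈ cubicStabilizer ↔ a ^ 3 - 3 * a * b ^ 2 = 1 := by
  have horth := blockRot_mul_transpose hab hw
  have hinv : (blockRot a b w)⁻¹ = (blockRot a b w)ᵀ := inv_eq_right_inv horth
  simp only [cubicStabilizer, Set.mem_ofPred_eq, horth, det_blockRot, hab, hw, hinv,
    cubicForm_transpose_blockRot_mulVec hw, mul_one, true_and]
  constructor
  · intro h
    simpa [cubicForm] using h ![1, 0, 0]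
  · intro h3 v
    -- `|ζ³| = 1` and `Re ζ³ = 1` force `Im ζ³ = 0`.
    have him : (3 * a ^ 2 * b - b ^ 3) ^ 2 = 0 := by
      linear_combination
        ((a ^ 2 + b ^ 2) ^ 2 + (a ^ 2 + b ^ 2) + 1) * hab - (a ^ 3 - 3 * a * b ^ 2 + 1) * h3
    rw [h3, pow_eq_zero_iff two_ne_zero |>.mp him]
    ring

theorem blockRot_inj {a' b' w' : ℝ} :
    blockRot a b w = blockRot a' b' w' ↔ a = a' ∧ b = b' ∧ w = w' := by
  refine ⟨fun h => ?_, fun ⟨ha, hb, hw⟩ => ha ▸ hb ▸ hw ▸ rfl⟩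
  have entry (i j : Fin 3) := congrFun₂ h i j
  exact ⟨by simpa [blockRot] using entry 0 0, by simpa [blockRot] using entry 1 0,
    by simpa [blockRot] using entry 2 2⟩

end blockRot

theorem cube_root_of_unity_iff {a b : ℝ} :
    a ^ 2 + b ^ 2 = 1 ∧ a ^ 3 - 3 * a * b ^ 2 = 1 ↔
      a = 1 ∧ b = 0 ∨ a = -1 / 2 ∧ b = √3 / 2 ∨ a = -1 / 2 ∧ b = -(√3 / 2) := by
  have h3 : √3 ^ 2 = 3 := Real.sq_sqrt (by norm_num)
  constructor
  · rintro ⟨hab, hcube⟩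
    have hfactor : (a - 1) * (2 * a + 1) ^ 2 = 0 := by linear_combination hcube + 3 * a * hab
    rcases mul_eq_zero.mp hfactor with ha | ha
    · have ha : a = 1 := by linarith
      subst ha
      left; exact ⟨rfl, by nlinarith⟩
    · have ha : a = -1 / 2 := by linarith [pow_eq_zero_iff two_ne_zero |>.mp ha]
      subst ha
      have hb : (b - √3 / 2) * (b + √3 / 2) = 0 := by linear_combination hab - h3 / 4
      rcases mul_eq_zero.mp hb with hb | hb
      · right; left; exact ⟨rfl, by linarith⟩
      · right; right; exact ⟨rfl, by linarith⟩
  · rintro (⟨rfl, rfl⟩ | ⟨rfl, rfl⟩ | ⟨rfl, rfl⟩) <;> constructor <;> linarith [h3]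

theorem cubicStabilizer_eq :
    cubicStabilizer =
      {blockRot 1 0 1, blockRot (-1 / 2) (√3 / 2) 1, blockRot (-1 / 2) (-(√3 / 2)) 1,
        blockRot 1 0 (-1), blockRot (-1 / 2) (-(√3 / 2)) (-1),
        blockRot (-1 / 2) (√3 / 2) (-1)} := by
  ext A
  constructor
  · intro hA
    obtain ⟨h02, h12⟩ := col_two_eq_zero_of_mem_cubicStabilizer hA
    obtain ⟨hA_eq, hab, hw⟩ := eq_blockRot_of_orthogonal hA.1 hA.2.1 h02 h12
    rw [hA_eq] at hA ⊢
    have hcube := (blockRot_mem_cubicStabilizer_iff hab hw).mp hA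
    rcases cube_root_of_unity_iff.mp ⟨hab, hcube⟩ with ⟨ha, hb⟩ | ⟨ha, hb⟩ | ⟨ha, hb⟩ <;>
      rcases sq_eq_one_iff.mp hw with hw | hw <;> simp [ha, hb, hw]
  · have mem {a b w : ℝ} (hab : a ^ 2 + b ^ 2 = 1 ∧ a ^ 3 - 3 * a * b ^ 2 = 1) (hw : w ^ 2 = 1) :
        blockRot a b w ∈ cubicStabilizer :=
      (blockRot_mem_cubicStabilizer_iff hab.1 hw).mpr hab.2
    rintro (rfl | rfl | rfl | rfl | rfl | rfl) <;>
      exact mem (cube_root_of_unity_iff.mpr (by norm_num)) (by norm_num)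

theorem cubicStabilizer_ncard : cubicStabilizer.ncard = 6 := by
  have hne : √3 / 2 ≠ -(√3 / 2) := (neg_lt_self (by positivity)).ne'
  rw [cubicStabilizer_eq]
  repeat rw [Set.ncard_insert_of_notMem]
  · rw [Set.ncard_singleton]
  all_goals norm_num [blockRot_inj, hne, hne.symm]

theorem one_eq_blockRot : (1 : Matrix (Fin 3) (Fin 3) ℝ) = blockRot 1 0 1 := by
  rw [blockRot, one_fin_three]; norm_num

theorem rotX_eq_blockRot : rotX = blockRot 1 0 (-1) := by
  rw [rotX, blockRot]; norm_num

theorem rotZ_eq_blockRot : rotZ = blockRot (-1 / 2) (√3 / 2) 1 := by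
  have h : 2 * π / 3 = π - π / 3 := by ring
  rw [rotZ, blockRot, h, cos_pi_sub, sin_pi_sub, cos_pi_div_three, sin_pi_div_three]
  norm_num

theorem blockRot_one_mul_blockRot_one (a b c d : ℝ) :
    blockRot a b 1 * blockRot c d 1 = blockRot (a * c - b * d) (b * c + a * d) 1 := by
  ext i j; fin_cases i <;> fin_cases j <;> simp [blockRot, mul_apply, Fin.sum_univ_three] <;> ring

theorem rotX_mul_blockRot_one (a b : ℝ) : rotX * blockRot a b 1 = blockRot a (-b) (-1) := by
  ext i j; fin_cases i <;> fin_cases j <;> simp [rotX, blockRot, mul_apply, Fin.sum_univ_three]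

theorem rotZ_mul_rotZ : rotZ * rotZ = blockRot (-1 / 2) (-(√3 / 2)) 1 := by
  have h3 : √3 ^ 2 = 3 := Real.sq_sqrt (by norm_num)
  rw [rotZ_eq_blockRot, blockRot_one_mul_blockRot_one, blockRot_inj]
  refine ⟨by linear_combination -h3 / 4, by ring, rfl⟩

theorem six_rotations_eq :
    ({1, rotZ, rotZ * rotZ, rotX, rotX * rotZ, rotX * rotZ * rotZ} :
        Set (Matrix (Fin 3) (Fin 3) ℝ)) =
      {blockRot 1 0 1, blockRot (-1 / 2) (√3 / 2) 1, blockRot (-1 / 2) (-(√3 / 2)) 1,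
        blockRot 1 0 (-1), blockRot (-1 / 2) (-(√3 / 2)) (-1),
        blockRot (-1 / 2) (√3 / 2) (-1)} := by
  rw [mul_assoc rotX, rotZ_mul_rotZ, rotX_mul_blockRot_one, rotZ_eq_blockRot,
    rotX_mul_blockRot_one, one_eq_blockRot, rotX_eq_blockRot, neg_neg]

/-- The stabilizer in SO(3) of x³ − 3xy² is the order-6 group generated by the rotation
by π about the x-axis and the rotation by 2π/3 about the z-axis. -/
theorem stabilizer_of_x3_minus_3xy2 :
    ({A : Matrix (Fin 3) (Fin 3) ℝ |
        A * Aᵀ = 1 ∧ A.det = 1 ∧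
          ∀ v : Fin 3 → ℝ,
            (A⁻¹.mulVec v 0) ^ 3 - 3 * A⁻¹.mulVec v 0 * (A⁻¹.mulVec v 1) ^ 2 =
              (v 0) ^ 3 - 3 * v 0 * (v 1) ^ 2} : Set (Matrix (Fin 3) (Fin 3) ℝ)) =
      {1, rotZ, rotZ * rotZ, rotX, rotX * rotZ, rotX * rotZ * rotZ} ∧
    ({1, rotZ, rotZ * rotZ, rotX, rotX * rotZ, rotX * rotZ * rotZ} :
        Set (Matrix (Fin 3) (Fin 3) ℝ)).ncard = 6 := by
  have h : cubicStabilizer = {1, rotZ, rotZ * rotZ, rotX, rotX * rotZ, rotX * rotZ * rotZ} :=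
    cubicStabilizer_eq.trans six_rotations_eq.symm
  exact ⟨h, h ▸ cubicStabilizer_ncard⟩
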